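/- arXiv:2303.06218 — 5 statements merged into one kernel-verified Lean document; each statement's English description precedes it below -/
import Mathlib

section
/- The quotient of the torus S¹ × S¹ by the ℤ/2-action (λ, μ) ↦ (λ⁻¹, μ⁻¹) is homeomorphic to the 2-sphere S². -/
/-!
Writing `λ = e^{iα}`, `μ = e^{iβ}`, the map `(λ, μ) ↦ (cos α, cos β, sin α sin β)` identifies
exactly the points of an orbit of the involution. Its image is the surface
`w² = (1 - u²)(1 - v²)`, `u², v² ≤ 1`, which meets every open ray from the origin exactly once:
along a ray the equation in `t²` has a single admissible root. Radial projection onto `S²` is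
therefore a continuous bijection from the compact quotient to a Hausdorff space, hence a
homeomorphism.
-/

theorem Quot.nonempty_homeomorph_of_surjective {X Y : Type*} [TopologicalSpace X]
    [CompactSpace X] [TopologicalSpace Y] [T2Space Y] {r : X → X → Prop} {f : X → Y}
    (hf : Continuous f) (hsurj : Function.Surjective f) (hr : ∀ x y, r x y → f x = f y)
    (hfib : ∀ x y, f x = f y → Quot.mk r x = Quot.mk r y) : Nonempty (Quot r ≃ₜ Y) := by
  refine ⟨Continuous.homeoOfEquivCompactToT2
    (f := Equiv.ofBijective (Quot.lift f hr) ⟨?_, ?_⟩) (continuous_quot_lift _ hf)⟩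
  · rintro ⟨x⟩ ⟨y⟩ h
    exact hfib x y h
  · intro y
    obtain ⟨x, hx⟩ := hsurj y
    exact ⟨Quot.mk r x, hx⟩

open Complex

namespace Circle

lemma re_sq_add_im_sq (z : Circle) : (z : ℂ).re ^ 2 + (z : ℂ).im ^ 2 = 1 := by
  simpa [normSq_apply, sq] using normSq_coe z

lemma inv_eq_self_of_im_eq_zero {z : Circle} (h : (z : ℂ).im = 0) : z⁻¹ = z :=
  coe_injective <| by rw [coe_inv_eq_conj, conj_eq_iff_im.mpr h]

lemma eq_or_eq_inv_of_re_eq {z w : Circle} (h : (w : ℂ).re = (z : ℂ).re) :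
    w = z ∨ w = z⁻¹ := by
  have him : (w : ℂ).im ^ 2 = (z : ℂ).im ^ 2 := by
    linarith [re_sq_add_im_sq z, re_sq_add_im_sq w, congrArg (· ^ 2) h]
  rcases sq_eq_sq_iff_eq_or_eq_neg.mp him with him | him
  · exact .inl <| coe_injective <| Complex.ext h him
  · exact .inr <| coe_injective <| by
      rw [coe_inv_eq_conj]; exact Complex.ext (by simpa) (by simpa)

lemma exists_re_im_eq {a b : ℝ} (h : a ^ 2 + b ^ 2 = 1) :
    ∃ z : Circle, (z : ℂ).re = a ∧ (z : ℂ).im = b :=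
  ⟨⟨⟨a, b⟩, by simp [Submonoid.unitSphere, Complex.norm_def, normSq_apply, ← sq, h]⟩, rfl, rfl⟩

lemma eq_or_eq_inv_of_re_eq_of_im_mul_im_eq {z z' w w' : Circle}
    (h : (w : ℂ).re = (z : ℂ).re) (h' : (w' : ℂ).re = (z' : ℂ).re)
    (him : (w : ℂ).im * (w' : ℂ).im = (z : ℂ).im * (z' : ℂ).im) :
    (w, w') = (z, z') ∨ (w, w') = (z⁻¹, z'⁻¹) := by
  rcases eq_or_eq_inv_of_re_eq h with rfl | rfl <;>
    rcases eq_or_eq_inv_of_re_eq h' with rfl | rfl <;>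
    simp only [coe_inv_eq_conj, conj_im, neg_mul, mul_neg, neg_neg] at him
  · exact .inl rfl
  · rcases mul_eq_zero.mp (by linarith : (w : ℂ).im * (z' : ℂ).im = 0) with hw | hz'
    · exact .inr (by rw [inv_eq_self_of_im_eq_zero hw])
    · exact .inl (by rw [inv_eq_self_of_im_eq_zero hz'])
  · rcases mul_eq_zero.mp (by linarith : (z : ℂ).im * (w' : ℂ).im = 0) with hz | hw'
    · exact .inl (by rw [inv_eq_self_of_im_eq_zero hz])
    · exact .inr (by rw [inv_eq_self_of_im_eq_zero hw'])
  · exact .inr rfl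

end Circle

def pillowcase : Set (EuclideanSpace ℝ (Fin 3)) :=
  {x | x 0 ^ 2 ≤ 1 ∧ x 1 ^ 2 ≤ 1 ∧ x 2 ^ 2 = (1 - x 0 ^ 2) * (1 - x 1 ^ 2)}

lemma eq_one_of_smul_mem_pillowcase {x : EuclideanSpace ℝ (Fin 3)} {t : ℝ} (ht : 0 ≤ t)
    (hx : x ∈ pillowcase) (htx : t • x ∈ pillowcase) : t = 1 := by
  obtain ⟨hx0, hx1, hx2⟩ := hx
  obtain ⟨htx0, htx1, htx2⟩ := htx
  simp only [PiLp.smul_apply, smul_eq_mul, mul_pow] at htx0 htx1 htx2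
  have hfactor : (t ^ 2 - 1) * (1 - t ^ 2 * x 0 ^ 2 * x 1 ^ 2) = 0 := by
    linear_combination htx2 - t ^ 2 * hx2
  have ht2 : t ^ 2 = 1 := by
    rcases mul_eq_zero.mp hfactor with h | h
    · linarith
    · have h0 : x 0 ^ 2 = 1 := by nlinarith [sq_nonneg (x 0), sq_nonneg (x 1)]
      nlinarith [sq_nonneg (x 0), sq_nonneg (x 1)]
  nlinarith

lemma exists_pos_smul_mem_pillowcase {y : EuclideanSpace ℝ (Fin 3)} (hy : ‖y‖ = 1) :
    ∃ t : ℝ, 0 < t ∧ t • y ∈ pillowcase := by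
  have hsum : y 0 ^ 2 + y 1 ^ 2 + y 2 ^ 2 = 1 := by
    simpa [Fin.sum_univ_three, hy] using (EuclideanSpace.real_norm_sq_eq y).symm
  have hp : 0 ≤ 1 - 4 * (y 0 ^ 2 * y 1 ^ 2) := by
    nlinarith [sq_nonneg (y 0 ^ 2 - y 1 ^ 2), sq_nonneg (y 2)]
  obtain ⟨r, hr, hr2⟩ : ∃ r : ℝ, 0 ≤ r ∧ r ^ 2 = 1 - 4 * (y 0 ^ 2 * y 1 ^ 2) :=
    ⟨_, Real.sqrt_nonneg _, Real.sq_sqrt hp⟩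
  -- `s = t ^ 2` is the smaller root of `y₀² y₁² s² - s + 1 = 0`
  obtain ⟨s, hs0, hs⟩ : ∃ s : ℝ, 0 < s ∧ s * (1 + r) = 2 :=
    ⟨2 / (1 + r), by positivity, div_mul_cancel₀ _ (by positivity)⟩
  have hs2 : (√s) ^ 2 = s := Real.sq_sqrt hs0.le
  have h0 : 2 * y 0 ^ 2 ≤ 1 + r := by nlinarith [mul_nonneg (sq_nonneg (y 0)) (sq_nonneg (y 2))]
  have h1 : 2 * y 1 ^ 2 ≤ 1 + r := by nlinarith [mul_nonneg (sq_nonneg (y 1)) (sq_nonneg (y 2))]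
  refine ⟨√s, Real.sqrt_pos.mpr hs0, ?_, ?_, ?_⟩ <;>
    simp only [PiLp.smul_apply, smul_eq_mul, mul_pow, hs2]
  · nlinarith
  · nlinarith
  · linear_combination (2 + s * r - s) * hs / 4 - s ^ 2 * hr2 / 4 + s * hsum

noncomputable def toPillowcase (p : Circle × Circle) : EuclideanSpace ℝ (Fin 3) :=
  !₂[(p.1 : ℂ).re, (p.2 : ℂ).re, (p.1 : ℂ).im * (p.2 : ℂ).im]

lemma continuous_toPillowcase : Continuous toPillowcase := by
  unfold toPillowcase
  fun_prop

@[simp] lemma toPillowcase_apply_zero (p : Circle × Circle) : toPillowcase p 0 = (p.1 : ℂ).re :=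
  rfl

@[simp] lemma toPillowcase_apply_one (p : Circle × Circle) : toPillowcase p 1 = (p.2 : ℂ).re :=
  rfl

@[simp] lemma toPillowcase_apply_two (p : Circle × Circle) :
    toPillowcase p 2 = (p.1 : ℂ).im * (p.2 : ℂ).im :=
  rfl

lemma toPillowcase_mem (p : Circle × Circle) : toPillowcase p ∈ pillowcase := by
  have h1 := p.1.re_sq_add_im_sq
  have h2 := p.2.re_sq_add_im_sq
  refine ⟨?_, ?_, ?_⟩ <;>
    simp only [toPillowcase_apply_zero, toPillowcase_apply_one, toPillowcase_apply_two]
  · nlinarith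
  · nlinarith
  · linear_combination (1 - (p.2 : ℂ).re ^ 2) * h1 + ((p.1 : ℂ).im ^ 2) * h2

lemma exists_toPillowcase_eq {x : EuclideanSpace ℝ (Fin 3)} (hx : x ∈ pillowcase) :
    ∃ p, toPillowcase p = x := by
  obtain ⟨hx0, hx1, hx2⟩ := hx
  obtain ⟨z, hz_re, hz_im⟩ := Circle.exists_re_im_eq (a := x 0) (b := √(1 - x 0 ^ 2))
    (by rw [Real.sq_sqrt (by linarith)]; ring)
  obtain ⟨w, hw_re, hw_im⟩ := Circle.exists_re_im_eq (a := x 1) (b := √(1 - x 1 ^ 2))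
    (by rw [Real.sq_sqrt (by linarith)]; ring)
  have hsq : x 2 ^ 2 = ((z : ℂ).im * (w : ℂ).im) ^ 2 := by
    rw [hz_im, hw_im, mul_pow, Real.sq_sqrt (by linarith), Real.sq_sqrt (by linarith), hx2]
  rcases sq_eq_sq_iff_eq_or_eq_neg.mp hsq with h | h
  · exact ⟨(z, w), by ext i; fin_cases i <;> simp [hz_re, hw_re, h]⟩
  · exact ⟨(z, w⁻¹), by ext i; fin_cases i <;> simp [hz_re, hw_re, h]⟩

lemma toPillowcase_inv (p : Circle × Circle) : toPillowcase (p.1⁻¹, p.2⁻¹) = toPillowcase p := by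
  simp [toPillowcase]

lemma toPillowcase_eq_iff {p q : Circle × Circle} :
    toPillowcase q = toPillowcase p ↔ q = p ∨ q = (p.1⁻¹, p.2⁻¹) := by
  refine ⟨fun h ↦ ?_, ?_⟩
  · exact Circle.eq_or_eq_inv_of_re_eq_of_im_mul_im_eq (congrArg (· 0) h) (congrArg (· 1) h)
      (congrArg (· 2) h)
  · rintro (rfl | rfl)
    · rfl
    · exact toPillowcase_inv p

lemma ne_zero_of_mem_pillowcase {x : EuclideanSpace ℝ (Fin 3)} (hx : x ∈ pillowcase) : x ≠ 0 := by
  rintro rfl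
  simp [pillowcase] at hx

lemma injOn_inv_norm_smul_pillowcase :
    Set.InjOn (fun x : EuclideanSpace ℝ (Fin 3) ↦ ‖x‖⁻¹ • x) pillowcase := by
  intro x hx y hy h
  have hxy : x = (‖x‖ * ‖y‖⁻¹) • y := by
    rw [mul_smul, ← show ‖x‖⁻¹ • x = ‖y‖⁻¹ • y from h,
      smul_inv_smul₀ (norm_ne_zero_iff.mpr (ne_zero_of_mem_pillowcase hx))]
  have ht : ‖x‖ * ‖y‖⁻¹ = 1 := eq_one_of_smul_mem_pillowcase (by positivity) hy (hxy ▸ hx)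
  rw [hxy, ht, one_smul]

lemma toPillowcase_ne_zero (p : Circle × Circle) : toPillowcase p ≠ 0 :=
  ne_zero_of_mem_pillowcase (toPillowcase_mem p)

noncomputable def toSphere (p : Circle × Circle) : Metric.sphere (0 : EuclideanSpace ℝ (Fin 3)) 1 :=
  ⟨‖toPillowcase p‖⁻¹ • toPillowcase p, by
    simp [norm_smul, toPillowcase_ne_zero]⟩

lemma continuous_toSphere : Continuous toSphere := by
  have hnorm : ∀ p, ‖toPillowcase p‖ ≠ 0 := fun p ↦ norm_ne_zero_iff.mpr (toPillowcase_ne_zero p)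
  exact (((continuous_norm.comp continuous_toPillowcase).inv₀ hnorm).smul
    continuous_toPillowcase).subtype_mk _

lemma toSphere_surjective : Function.Surjective toSphere := by
  rintro ⟨y, hy⟩
  rw [mem_sphere_zero_iff_norm] at hy
  obtain ⟨t, ht, hty⟩ := exists_pos_smul_mem_pillowcase hy
  obtain ⟨p, hp⟩ := exists_toPillowcase_eq hty
  refine ⟨p, Subtype.ext ?_⟩
  simp [toSphere, hp, norm_smul, hy, abs_of_pos ht, smul_smul, ht.ne']

lemma toSphere_eq_iff {p q : Circle × Circle} :
    toSphere q = toSphere p ↔ q = p ∨ q = (p.1⁻¹, p.2⁻¹) := by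
  rw [← toPillowcase_eq_iff]
  exact ⟨fun h ↦ injOn_inv_norm_smul_pillowcase (toPillowcase_mem q) (toPillowcase_mem p)
    (congrArg Subtype.val h), fun h ↦ by simp [toSphere, h]⟩

/-- The quotient of the torus `S¹ × S¹` by the `ℤ/2`-action
`(λ, μ) ↦ (λ⁻¹, μ⁻¹)` is homeomorphic to the 2-sphere `S²`. -/
theorem pillowcase_homeomorph_sphere :
    Nonempty
      ((Quot fun p q : Circle × Circle => q = (p.1⁻¹, p.2⁻¹)) ≃ₜ
        Metric.sphere (0 : EuclideanSpace ℝ (Fin 3)) 1) :=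
  Quot.nonempty_homeomorph_of_surjective continuous_toSphere toSphere_surjective
    (fun p q h ↦ (toSphere_eq_iff.mpr (.inr h)).symm) fun p q h ↦ by
      rcases toSphere_eq_iff.mp h.symm with rfl | rfl
      · rfl
      · exact Quot.sound rfl
end

section
/- Let H: ℂ² × [0,1] → ℂ², defined in polar coordinates a = r·e^{iα}, d = s·e^{iβ} by H_t(a, d) = (h_t¹(r,s)·e^{iα}, h_t²(r,s)·e^{iβ}), where h_t¹(r,s) = (1−t)r + t√(rs) if r ≥ s and rs/((1−t)s + t√(rs)) if s > r, and h_t²(r,s) = rs/((1−t)r + t√(rs)) if r > s and (1−t)s + t√(rs) if s ≥ r. Then: (i) H₀ = id; (ii) H₁(a,d) lies in the set {|a| = |d|}; (iii) H_t fixes {|a| = |d|} pointwise for all t; (iv) H_t preserves the set {(a,d) : |a|·|d| = 1}, i.e. if |a||d| = 1 then |H_t(a,d)₁|·|H_t(a,d)₂| = 1 for all t; and H is continuous. -/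
/-!
Off the diagonal one of `h_t¹, h_t²` is the convex combination `(1 - t)·max(r, s) + t·√(rs)` of
the larger radius with the geometric mean and the other one is `rs` divided by it, so
`h_t¹ h_t² = rs`; on the diagonal both are `r`, and at `t = 0, 1` they are `(r, s)` and
`(√(rs), √(rs))`. For continuity, `h_t¹` is given by one formula on each of the closed regions
`s ≤ r` and `r ≤ s`; the quotient formula is bounded by `√(rs)` there, which squeezes it to `0`
at `r = 0`. The angle `e^{i arg a}` is continuous off `a = 0`, where the radius `h_t¹` vanishes.
-/

open Complex

noncomputable section

/-- `h_t¹(r,s)`: first radial component of the homotopy. -/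
def h1 (t r s : ℝ) : ℝ :=
  if s ≤ r then (1 - t) * r + t * Real.sqrt (r * s)
  else r * s / ((1 - t) * s + t * Real.sqrt (r * s))

/-- `h_t²(r,s)`: second radial component of the homotopy. -/
def h2 (t r s : ℝ) : ℝ :=
  if r ≤ s then (1 - t) * s + t * Real.sqrt (r * s)
  else r * s / ((1 - t) * r + t * Real.sqrt (r * s))

/-- The homotopy `H_t(a, d) = (h_t¹(r,s)·e^{iα}, h_t²(r,s)·e^{iβ})`, where `a = r·e^{iα}`,
`d = s·e^{iβ}` in polar coordinates. -/
def Hretract (t : ℝ) (p : ℂ × ℂ) : ℂ × ℂ :=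
  ((h1 t (‖p.1‖) (‖p.2‖) : ℂ) * Complex.exp (p.1.arg * Complex.I),
   (h2 t (‖p.1‖) (‖p.2‖) : ℂ) * Complex.exp (p.2.arg * Complex.I))

theorem norm_ofReal_mul_exp_arg_mul_I (x : ℝ) (z : ℂ) :
    ‖(x : ℂ) * exp (arg z * I)‖ = |x| := by
  rw [norm_mul, norm_real, Real.norm_eq_abs, norm_exp_ofReal_mul_I, mul_one]

theorem continuousOn_exp_arg_mul_I : ContinuousOn (fun z : ℂ => exp (arg z * I)) {0}ᶜ := by
  have hnorm : ContinuousOn (fun z : ℂ => z / (‖z‖ : ℂ)) {0}ᶜ :=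
    continuousOn_id.div (by fun_prop) fun z hz => ofReal_ne_zero.2 (norm_ne_zero_iff.2 hz)
  refine hnorm.congr fun z hz => ?_
  rw [eq_div_iff (ofReal_ne_zero.2 (norm_ne_zero_iff.2 hz)), mul_comm]
  exact norm_mul_exp_arg_mul_I z

theorem ContinuousOn.ofReal_mul_exp_arg_mul_I {X : Type*} [TopologicalSpace X] {U : Set X}
    {ρ : X → ℝ} {a : X → ℂ} (hρ : ContinuousOn ρ U) (ha : Continuous a)
    (hρa : ∀ x ∈ U, a x = 0 → ρ x = 0) :
    ContinuousOn (fun x => (ρ x : ℂ) * exp (arg (a x) * I)) U := by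
  intro x hx
  by_cases hax : a x = 0
  · have hlim : Filter.Tendsto (fun y => |ρ y|) (nhdsWithin x U) (nhds 0) := by
      simpa [ContinuousWithinAt, hρa x hx hax] using (hρ x hx).abs
    simp only [ContinuousWithinAt, hρa x hx hax, ofReal_zero, zero_mul]
    exact squeeze_zero_norm (fun y => (norm_ofReal_mul_exp_arg_mul_I _ _).le) hlim
  · have hdir : ContinuousAt (fun y => exp (arg (a y) * I)) x :=
      (continuousOn_exp_arg_mul_I.continuousAt (isOpen_compl_singleton.mem_nhds hax)).comp
        ha.continuousAt
    exact (continuous_ofReal.continuousAt.comp_continuousWithinAt (hρ x hx)).mul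
      hdir.continuousWithinAt

theorem h2_eq_h1_swap (t r s : ℝ) : h2 t r s = h1 t s r := by
  rw [h1, h2, mul_comm r s]

theorem h1_time_zero {r : ℝ} (hr : 0 ≤ r) (s : ℝ) : h1 0 r s = r := by
  rw [h1]
  split_ifs with hsr
  · ring
  · have hs : s ≠ 0 := (hr.trans_lt (not_le.1 hsr)).ne'
    simp [hs]

theorem h1_time_one (r s : ℝ) : h1 1 r s = √(r * s) := by
  rw [h1]
  split_ifs
  · ring
  · simp [Real.div_sqrt]

theorem h1_self {r : ℝ} (hr : 0 ≤ r) (t : ℝ) : h1 t r r = r := by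
  rw [h1, if_pos le_rfl, Real.sqrt_mul_self hr]
  ring

theorem h1_radius_zero (t s : ℝ) : h1 t 0 s = 0 := by
  simp [h1]

theorem h1_eq_div_of_le {t r s : ℝ} (hr : 0 ≤ r) (hrs : r ≤ s) :
    h1 t r s = r * s / ((1 - t) * s + t * √(r * s)) := by
  rcases hrs.lt_or_eq with hlt | rfl
  · rw [h1, if_neg (not_le.2 hlt)]
  · rw [h1_self hr, Real.sqrt_mul_self hr, ← add_mul, sub_add_cancel, one_mul]
    rcases hr.eq_or_lt with rfl | hr
    · simp
    · field_simp

theorem sqrt_mul_le_one_sub_mul_add_mul {t r s : ℝ} (ht : t ∈ Set.Icc (0 : ℝ) 1)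
    (hr : 0 ≤ r) (hrs : r ≤ s) : √(r * s) ≤ (1 - t) * s + t * √(r * s) := by
  have hsqrt_le : √(r * s) ≤ s := (Real.sqrt_le_left (hr.trans hrs)).2 (by nlinarith)
  nlinarith [ht.1, ht.2]

theorem mul_div_le_sqrt_mul {t r s : ℝ} (ht : t ∈ Set.Icc (0 : ℝ) 1) (hr : 0 ≤ r)
    (hrs : r ≤ s) : r * s / ((1 - t) * s + t * √(r * s)) ≤ √(r * s) := by
  have hden := sqrt_mul_le_one_sub_mul_add_mul ht hr hrs
  refine div_le_of_le_mul₀ ((Real.sqrt_nonneg _).trans hden) (Real.sqrt_nonneg _) ?_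
  calc r * s = √(r * s) * √(r * s) := (Real.mul_self_sqrt (mul_nonneg hr (hr.trans hrs))).symm
    _ ≤ √(r * s) * ((1 - t) * s + t * √(r * s)) :=
      mul_le_mul_of_nonneg_left hden (Real.sqrt_nonneg _)

theorem h1_mul_h2_of_le {t r s : ℝ} (ht : t ∈ Set.Icc (0 : ℝ) 1) (hr : 0 < r) (hrs : r ≤ s) :
    h1 t r s * h2 t r s = r * s := by
  have hden : 0 < (1 - t) * s + t * √(r * s) :=
    (Real.sqrt_pos.2 (mul_pos hr (hr.trans_le hrs))).trans_le
      (sqrt_mul_le_one_sub_mul_add_mul ht hr.le hrs)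
  rw [h1_eq_div_of_le hr.le hrs, h2, if_pos hrs, div_mul_cancel₀ _ hden.ne']

theorem h1_mul_h2 {t r s : ℝ} (ht : t ∈ Set.Icc (0 : ℝ) 1) (hr : 0 < r) (hs : 0 < s) :
    h1 t r s * h2 t r s = r * s := by
  rcases le_total r s with hrs | hsr
  · exact h1_mul_h2_of_le ht hr hrs
  · rw [h2_eq_h1_swap, ← h2_eq_h1_swap, mul_comm, h1_mul_h2_of_le ht hs hsr, mul_comm]

theorem continuousOn_h1_of_le :
    ContinuousOn (fun x : ℝ × ℝ × ℝ => h1 x.1 x.2.1 x.2.2)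
      (Set.Icc 0 1 ×ˢ (Set.Ici 0 ×ˢ Set.Ici 0) ∩ {x | x.2.1 ≤ x.2.2}) := by
  rintro ⟨t, r, s⟩ ⟨⟨ht, hr, -⟩, hrs⟩
  simp only [Set.mem_Ici] at hr
  refine ContinuousWithinAt.congr
    (f := fun x : ℝ × ℝ × ℝ => x.2.1 * x.2.2 / ((1 - x.1) * x.2.2 + x.1 * √(x.2.1 * x.2.2)))
    ?_ (fun y hy => h1_eq_div_of_le hy.1.2.1 hy.2) (h1_eq_div_of_le hr hrs)
  rcases hr.eq_or_lt with rfl | hr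
  · have hsqrt :
        Filter.Tendsto (fun x : ℝ × ℝ × ℝ => √(x.2.1 * x.2.2)) (nhds (t, 0, s)) (nhds 0) := by
      simpa using (show Continuous fun x : ℝ × ℝ × ℝ => √(x.2.1 * x.2.2) by fun_prop).tendsto
        (t, 0, s)
    simp only [ContinuousWithinAt, zero_mul, zero_div]
    refine squeeze_zero' ?_ ?_ (hsqrt.mono_left nhdsWithin_le_nhds)
    · filter_upwards [self_mem_nhdsWithin] with y hy
      exact div_nonneg (mul_nonneg hy.1.2.1 (hy.1.2.1.trans hy.2))
        ((Real.sqrt_nonneg _).trans (sqrt_mul_le_one_sub_mul_add_mul hy.1.1 hy.1.2.1 hy.2))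
    · filter_upwards [self_mem_nhdsWithin] with y hy
      exact mul_div_le_sqrt_mul hy.1.1 hy.1.2.1 hy.2
  · have hden : 0 < (1 - t) * s + t * √(r * s) :=
      (Real.sqrt_pos.2 (mul_pos hr (hr.trans_le hrs))).trans_le
        (sqrt_mul_le_one_sub_mul_add_mul ht hr.le hrs)
    exact (ContinuousAt.div (f := fun x : ℝ × ℝ × ℝ => x.2.1 * x.2.2)
      (g := fun x : ℝ × ℝ × ℝ => (1 - x.1) * x.2.2 + x.1 * √(x.2.1 * x.2.2))
      (by fun_prop) (by fun_prop) hden.ne').continuousWithinAt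

theorem continuousOn_h1 :
    ContinuousOn (fun x : ℝ × ℝ × ℝ => h1 x.1 x.2.1 x.2.2)
      (Set.Icc 0 1 ×ˢ (Set.Ici 0 ×ˢ Set.Ici 0)) := by
  set S : Set (ℝ × ℝ × ℝ) := Set.Icc 0 1 ×ˢ (Set.Ici 0 ×ˢ Set.Ici 0)
  have hS : IsClosed S := isClosed_Icc.prod (isClosed_Ici.prod isClosed_Ici)
  have hge : ContinuousOn (fun x : ℝ × ℝ × ℝ => h1 x.1 x.2.1 x.2.2) (S ∩ {x | x.2.2 ≤ x.2.1}) :=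
    (show Continuous fun x : ℝ × ℝ × ℝ => (1 - x.1) * x.2.1 + x.1 * √(x.2.1 * x.2.2) by
      fun_prop).continuousOn.congr fun x hx => if_pos hx.2
  refine (hge.union_of_isClosed continuousOn_h1_of_le (hS.inter (isClosed_le (by fun_prop)
    (by fun_prop))) (hS.inter (isClosed_le (by fun_prop) (by fun_prop)))).mono fun x hx => ?_
  rcases le_total x.2.2 x.2.1 with h | h
  · exact Or.inl ⟨hx, h⟩
  · exact Or.inr ⟨hx, h⟩

theorem ContinuousOn.h1 {X : Type*} [TopologicalSpace X] {U : Set X} {t r s : X → ℝ}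
    (ht : ContinuousOn t U) (hr : ContinuousOn r U) (hs : ContinuousOn s U)
    (hmaps : ∀ x ∈ U, t x ∈ Set.Icc (0 : ℝ) 1 ∧ 0 ≤ r x ∧ 0 ≤ s x) :
    ContinuousOn (fun x => h1 (t x) (r x) (s x)) U :=
  continuousOn_h1.comp (ht.prodMk (hr.prodMk hs)) hmaps

/-- The homotopy `H` is continuous on `ℂ² × [0,1]`, satisfies `H₀ = id`,
`H₁` lands in `{|a| = |d|}`, fixes `{|a| = |d|}` pointwise, and preserves the set
`{|a|·|d| = 1}`. -/
theorem Hretract_properties :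
    ContinuousOn (fun q : (ℂ × ℂ) × ℝ => Hretract q.2 q.1)
      (Set.univ ×ˢ Set.Icc (0 : ℝ) 1) ∧
    (∀ p : ℂ × ℂ, Hretract 0 p = p) ∧
    (∀ p : ℂ × ℂ, ‖(Hretract 1 p).1‖ = ‖(Hretract 1 p).2‖) ∧
    (∀ t ∈ Set.Icc (0 : ℝ) 1, ∀ p : ℂ × ℂ,
      ‖p.1‖ = ‖p.2‖ → Hretract t p = p) ∧
    (∀ t ∈ Set.Icc (0 : ℝ) 1, ∀ p : ℂ × ℂ,
      ‖p.1‖ * ‖p.2‖ = 1 →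
        ‖(Hretract t p).1‖ * ‖(Hretract t p).2‖ = 1) := by
  refine ⟨?_, fun p => ?_, fun p => ?_, fun t _ p hp => ?_, fun t ht p hp => ?_⟩
  · simp only [Hretract, h2_eq_h1_swap]
    refine .prodMk (.ofReal_mul_exp_arg_mul_I ?_ (by fun_prop) fun q _ hq => by
      simp [hq, h1_radius_zero]) (.ofReal_mul_exp_arg_mul_I ?_ (by fun_prop) fun q _ hq => by
      simp [hq, h1_radius_zero]) <;>
    exact continuousOn_snd.h1 (by fun_prop) (by fun_prop) fun q hq =>
      ⟨hq.2, norm_nonneg _, norm_nonneg _⟩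
  · rw [Hretract, h2_eq_h1_swap, h1_time_zero (norm_nonneg _), h1_time_zero (norm_nonneg _),
      norm_mul_exp_arg_mul_I, norm_mul_exp_arg_mul_I]
  · rw [Hretract, h2_eq_h1_swap, h1_time_one, h1_time_one, norm_ofReal_mul_exp_arg_mul_I,
      norm_ofReal_mul_exp_arg_mul_I, mul_comm]
  · rw [Hretract, h2_eq_h1_swap, hp, h1_self (norm_nonneg _), ← hp, norm_mul_exp_arg_mul_I, hp,
      norm_mul_exp_arg_mul_I]
  · have hr : 0 < ‖p.1‖ := (norm_nonneg _).lt_of_ne fun h => by simp [← h] at hp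
    have hs : 0 < ‖p.2‖ := (norm_nonneg _).lt_of_ne fun h => by simp [← h] at hp
    rw [Hretract, norm_ofReal_mul_exp_arg_mul_I, norm_ofReal_mul_exp_arg_mul_I, ← abs_mul,
      h1_mul_h2 ht hr hs, hp, abs_one]

end
end

section
/- The map H: {(a,d) ∈ ℂ² : |a| = |d|} × [0,1] → ℂ² given by H_t(a, d) = (a, (1−t)d + t·|d|·e^{−i·arg(a)}) when a ≠ 0 (equivalently H_t(a,d) = (a, (1−t)d + t·(|d|/|a|)·ā)) and H_t(0,0) = (0,0), is a continuous homotopy with H₀ = id, H₁(a,d) = (a, ā), and H_t(a, ā) = (a, ā) for all t. -/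
/-!
Wherever `a ≠ 0` on the locus `|a| = |d|` the factor `|d| / |a|` equals `1`, and `a = 0` forces
`d = 0`. So on the locus `H_t` agrees with the straight-line homotopy
`(a, d) ↦ (a, (1 - t) d + t ā)`, which is continuous on all of `ℂ² × ℝ` and visibly has the
stated endpoints and fixed points.
-/

open Complex

noncomputable section

/-- The homotopy `H_t(a, d) = (a, (1−t)d + t·(|d|/|a|)·ā)` for `a ≠ 0`, and
`H_t(0,0) = (0,0)`; defined on the locus `{|a| = |d|}`. -/
def Hangle (t : ℝ) (p : ℂ × ℂ) : ℂ × ℂ :=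
  if p.1 = 0 then (0, 0)
  else (p.1, (1 - t) * p.2 +
    (t : ℂ) * ((‖p.2‖ / ‖p.1‖ : ℝ) : ℂ) * (starRingEnd ℂ) p.1)

theorem Hangle_eq_of_norm_eq (t : ℝ) {p : ℂ × ℂ} (hp : ‖p.1‖ = ‖p.2‖) :
    Hangle t p = (p.1, (1 - t) * p.2 + t * (starRingEnd ℂ) p.1) := by
  obtain ⟨a, d⟩ := p
  by_cases ha : a = 0
  · have hd : d = 0 := norm_eq_zero.mp (by simpa [ha] using hp.symm)
    simp [Hangle, ha, hd]
  · have hratio : ‖d‖ / ‖a‖ = 1 := by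
      rw [← hp, div_self (norm_ne_zero_iff.mpr ha)]
    simp [Hangle, ha, hratio]

/-- On the set `{(a,d) : |a| = |d|}`, the homotopy `Hangle` is continuous,
satisfies `H₀ = id`, `H₁(a,d) = (a, ā)`, and fixes all points of the form `(a, ā)`. -/
theorem Hangle_properties :
    ContinuousOn (fun q : (ℂ × ℂ) × ℝ => Hangle q.2 q.1)
      ({p : ℂ × ℂ | ‖p.1‖ = ‖p.2‖} ×ˢ Set.Icc (0 : ℝ) 1) ∧
    (∀ p : ℂ × ℂ, ‖p.1‖ = ‖p.2‖ → Hangle 0 p = p) ∧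
    (∀ p : ℂ × ℂ, ‖p.1‖ = ‖p.2‖ →
      Hangle 1 p = (p.1, (starRingEnd ℂ) p.1)) ∧
    (∀ t ∈ Set.Icc (0 : ℝ) 1, ∀ a : ℂ, Hangle t (a, (starRingEnd ℂ) a) = (a, (starRingEnd ℂ) a)) := by
  refine ⟨?_, fun p hp => ?_, fun p hp => ?_, fun t _ a => ?_⟩
  · have hline : Continuous fun q : (ℂ × ℂ) × ℝ =>
        (q.1.1, (1 - (q.2 : ℂ)) * q.1.2 + q.2 * (starRingEnd ℂ) q.1.1) := by
      fun_prop
    exact hline.continuousOn.congr fun q hq => Hangle_eq_of_norm_eq q.2 hq.1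
  · simp [Hangle_eq_of_norm_eq 0 hp]
  · simp [Hangle_eq_of_norm_eq 1 hp]
  · rw [Hangle_eq_of_norm_eq t (norm_conj a).symm]
    simp only [Prod.mk.injEq, true_and]
    ring

end
end

section
/- The map ϖ: Sym²(S¹ × S¹) → S¹ × S¹ sending the multiset {(λ₁, μ₁), (λ₂, μ₂)} to (λ₁λ₂, μ₁μ₂) is a well-defined continuous surjection, every fiber is homeomorphic to SSym²(S¹ × S¹) = ϖ⁻¹(1,1), and ϖ is a locally trivial fiber bundle. -/
/-!
Translating both points of a pair by `c` multiplies `ϖ` by `c²`, so the diagonal action of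
`S¹ × S¹` on `Sym²(S¹ × S¹)` carries the fibre over `1` homeomorphically onto the fibre over
`c²`. Near any point `b` the squaring map has a continuous section `r` (a branch of the square
root on a slit circle), and `x ↦ (ϖ x, r (ϖ x)⁻¹ • x)` trivialises `ϖ` there. Continuity of the
action `(c, x) ↦ c • x` on the quotient `Sym²` holds because `G × G → Sym² G` is an open
quotient map, and products of open quotient maps are quotient maps.
-/

open Set Complex

/-- The map `ϖ : Sym²(S¹ × S¹) → S¹ × S¹` sending `{(λ₁,μ₁), (λ₂,μ₂)}` to
`(λ₁λ₂, μ₁μ₂)`. -/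
noncomputable def symProd : Sym2 (Circle × Circle) → Circle × Circle :=
  Sym2.lift ⟨fun x y => (x.1 * y.1, x.2 * y.2), by
    intro x y
    exact Prod.ext (mul_comm _ _) (mul_comm _ _)⟩
namespace Sym2

variable {α β γ : Type*} [TopologicalSpace α] [TopologicalSpace β] [TopologicalSpace γ]

theorem isOpenMap_mk : IsOpenMap (Quot.mk (Rel α)) := by
  intro s hs
  have : Quot.mk (Rel α) ⁻¹' (Quot.mk (Rel α) '' s) = s ∪ Prod.swap ⁻¹' s := by
    ext ⟨a, b⟩
    constructor
    · rintro ⟨⟨c, d⟩, hcd, h⟩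
      rcases (mk_eq_mk_iff (p := (c, d)) (q := (a, b))).mp h with h | h <;> cases h
      exacts [Or.inl hcd, Or.inr hcd]
    · rintro (h | h)
      exacts [⟨_, h, rfl⟩, ⟨_, h, eq_swap⟩]
  rw [← isQuotientMap_quot_mk.isOpen_preimage, this]
  exact hs.union (hs.preimage continuous_swap)

theorem isOpenQuotientMap_mk : IsOpenQuotientMap (Quot.mk (Rel α)) :=
  ⟨Quot.mk_surjective, continuous_quot_mk, isOpenMap_mk⟩

theorem continuous_lift {f : {f : α → α → β // ∀ a b, f a b = f b a}}
    (hf : Continuous fun p : α × α => f.1 p.1 p.2) : Continuous (lift f) :=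
  isQuotientMap_quot_mk.continuous_iff.mpr hf

theorem continuous_map {f : α → β} (hf : Continuous f) : Continuous (map f) :=
  isQuotientMap_quot_mk.continuous_iff.mpr <|
    continuous_quot_mk.comp (hf.prodMap hf)

theorem continuous_map_uncurry {g : γ → α → β} (hg : Continuous (Function.uncurry g)) :
    Continuous fun p : γ × Sym2 α => p.2.map (g p.1) := by
  rw [← (IsOpenQuotientMap.id.prodMap isOpenQuotientMap_mk).continuous_comp_iff]
  exact continuous_quot_mk.comp <|
    (hg.comp (continuous_fst.prodMk continuous_snd.fst)).prodMk
      (hg.comp (continuous_fst.prodMk continuous_snd.snd))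

end Sym2

@[simps]
def Homeomorph.sym2Map {α β : Type*} [TopologicalSpace α] [TopologicalSpace β] (e : α ≃ₜ β) :
    Sym2 α ≃ₜ Sym2 β where
  toFun := Sym2.map e
  invFun := Sym2.map e.symm
  left_inv x := by simp [Sym2.map_map]
  right_inv x := by simp [Sym2.map_map]
  continuous_toFun := Sym2.continuous_map e.continuous
  continuous_invFun := Sym2.continuous_map e.symm.continuous

namespace Sym2

theorem continuous_mul {M : Type*} [CommMagma M] [TopologicalSpace M] [ContinuousMul M] :
    Continuous (Sym2.mul : Sym2 M → M) :=
  continuous_lift _root_.continuous_mul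

theorem continuous_map_mul_left {M : Type*} [Mul M] [TopologicalSpace M] [ContinuousMul M] :
    Continuous fun p : M × Sym2 M => p.2.map (p.1 * ·) :=
  continuous_map_uncurry _root_.continuous_mul

theorem mul_map_mul_left {M : Type*} [CommSemigroup M] (c : M) (x : Sym2 M) :
    (x.map (c * ·)).mul = c * c * x.mul := by
  induction x using Sym2.ind with
  | _ a b => exact mul_mul_mul_comm c a c b

theorem map_mul_left_map_mul_left {M : Type*} [Semigroup M] (a b : M) (x : Sym2 M) :
    (x.map (a * ·)).map (b * ·) = x.map (b * a * ·) := by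
  rw [map_map]
  congr 1
  funext z
  exact (mul_assoc b a z).symm

theorem map_mul_left_inv_map_mul_left {G : Type*} [Group G] (a : G) (x : Sym2 G) :
    (x.map (a * ·)).map (a⁻¹ * ·) = x := by
  rw [map_mul_left_map_mul_left, inv_mul_cancel]
  simp

theorem map_mul_left_map_mul_left_inv {G : Type*} [Group G] (a : G) (x : Sym2 G) :
    (x.map (a⁻¹ * ·)).map (a * ·) = x := by
  simpa using map_mul_left_inv_map_mul_left a⁻¹ x

noncomputable def mulFiberHomeomorph {G : Type*} [CommGroup G] [TopologicalSpace G]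
    [ContinuousMul G] (c : G) : mul ⁻¹' {c * c} ≃ₜ mul ⁻¹' {(1 : G)} :=
  (Homeomorph.mulLeft c⁻¹).sym2Map.subtype fun x => by
    rw [mem_preimage, mem_preimage, mem_singleton_iff, mem_singleton_iff,
      Homeomorph.sym2Map_apply, Homeomorph.coe_mulLeft, mul_map_mul_left, ← mul_inv,
      inv_mul_eq_one, eq_comm]

variable {G : Type*} [CommGroup G] [TopologicalSpace G] [IsTopologicalGroup G]
  {U : Set G} {r : G → G}

noncomputable def mulLocalTriv (hr : ContinuousOn r U) (hsq : ∀ u ∈ U, r u * r u = u) :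
    mul ⁻¹' U ≃ₜ U × mul ⁻¹' {(1 : G)} where
  toFun x := (⟨x.1.mul, x.2⟩, ⟨x.1.map ((r x.1.mul)⁻¹ * ·), by
    rw [mem_preimage, mul_map_mul_left, ← mul_inv, hsq _ x.2, inv_mul_cancel, mem_singleton_iff]⟩)
  invFun p := ⟨p.2.1.map (r p.1 * ·), by
    rw [mem_preimage, mul_map_mul_left, p.2.2, mul_one, hsq _ p.1.2]
    exact p.1.2⟩
  left_inv x := Subtype.ext (map_mul_left_map_mul_left_inv _ _)
  right_inv p := by
    have hmul : (p.2.1.map (r p.1 * ·)).mul = p.1 := by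
      rw [mul_map_mul_left, p.2.2, mul_one, hsq _ p.1.2]
    ext
    · exact hmul
    · simp only [hmul, map_mul_left_inv_map_mul_left]
  continuous_toFun := by
    have hmul : Continuous fun x : mul ⁻¹' U => x.1.mul :=
      continuous_mul.comp continuous_subtype_val
    have hr' : Continuous fun x : mul ⁻¹' U => r x.1.mul := hr.comp_continuous hmul fun x => x.2
    exact (hmul.subtype_mk _).prodMk <|
      (continuous_map_mul_left.comp (hr'.inv.prodMk continuous_subtype_val)).subtype_mk _
  continuous_invFun := by
    have hr' : Continuous fun p : U × mul ⁻¹' {(1 : G)} => r p.1 :=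
      (hr.comp_continuous continuous_subtype_val fun u => u.2).comp continuous_fst
    exact (continuous_map_mul_left.comp
      (hr'.prodMk (continuous_subtype_val.comp continuous_snd))).subtype_mk _

theorem mulLocalTriv_fst (hr : ContinuousOn r U) (hsq : ∀ u ∈ U, r u * r u = u)
    (x : mul ⁻¹' U) : ((mulLocalTriv hr hsq x).1 : G) = x.1.mul :=
  rfl

end Sym2

def LocallyHasContinuousSqrt (G : Type*) [Mul G] [TopologicalSpace G] : Prop :=
  ∀ b : G, ∃ U : Set G, IsOpen U ∧ b ∈ U ∧
    ∃ r : G → G, ContinuousOn r U ∧ ∀ u ∈ U, r u * r u = u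

theorem LocallyHasContinuousSqrt.prod {G H : Type*} [Mul G] [Mul H] [TopologicalSpace G]
    [TopologicalSpace H] (hG : LocallyHasContinuousSqrt G) (hH : LocallyHasContinuousSqrt H) :
    LocallyHasContinuousSqrt (G × H) := by
  rintro ⟨b₁, b₂⟩
  obtain ⟨U₁, hU₁, hb₁, r₁, hr₁, hsq₁⟩ := hG b₁
  obtain ⟨U₂, hU₂, hb₂, r₂, hr₂, hsq₂⟩ := hH b₂
  exact ⟨U₁ ×ˢ U₂, hU₁.prod hU₂, ⟨hb₁, hb₂⟩, Prod.map r₁ r₂, hr₁.prodMap hr₂,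
    fun u hu => Prod.ext (hsq₁ _ hu.1) (hsq₂ _ hu.2)⟩

namespace Circle

noncomputable def sqrt (z : Circle) : Circle := exp (arg z / 2)

theorem sqrt_mul_self (z : Circle) : sqrt z * sqrt z = z := by
  rw [sqrt, ← exp_add, add_halves, exp_arg]

theorem continuousOn_sqrt : ContinuousOn sqrt {z | (z : ℂ) ∈ slitPlane} := fun _ hz =>
  (exp.continuous.continuousAt.comp <| ((continuousAt_arg hz).comp
    continuous_subtype_val.continuousAt).div_const 2).continuousWithinAt

theorem locallyHasContinuousSqrt : LocallyHasContinuousSqrt Circle := by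
  intro b
  refine ⟨(· / b) ⁻¹' {z | (z : ℂ) ∈ slitPlane},
    isOpen_slitPlane.preimage (by fun_prop), by simp [one_mem_slitPlane],
    fun u => sqrt b * sqrt (u / b), ?_, fun u _ => ?_⟩
  · exact (continuousOn_sqrt.comp (by fun_prop) (mapsTo_preimage _ _)).const_mul _
  · rw [mul_mul_mul_comm, sqrt_mul_self, sqrt_mul_self, mul_div_cancel]

end Circle

/-- `symProd` is a well-defined continuous surjection, all of its fibers
are homeomorphic to the fiber `SSym²(S¹×S¹)` over `(1,1)`, and it is a locally trivial
fiber bundle. -/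
theorem symProd_fiber_bundle :
    Continuous symProd ∧
    Function.Surjective symProd ∧
    (∀ b : Circle × Circle,
      Nonempty ((symProd ⁻¹' {b}) ≃ₜ (symProd ⁻¹' {((1 : Circle), (1 : Circle))}))) ∧
    (∀ b : Circle × Circle, ∃ U : Set (Circle × Circle), IsOpen U ∧ b ∈ U ∧
      ∃ e : (symProd ⁻¹' U) ≃ₜ U × (symProd ⁻¹' {((1 : Circle), (1 : Circle))}),
        ∀ x : symProd ⁻¹' U, ((e x).1 : Circle × Circle) = symProd x) := by
  have hsymProd : symProd = Sym2.mul := rfl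
  have hsqrt := Circle.locallyHasContinuousSqrt.prod Circle.locallyHasContinuousSqrt
  rw [hsymProd, ← Prod.one_eq_mk]
  refine ⟨Sym2.continuous_mul, fun b => ?_, fun b => ?_, fun b => ?_⟩ <;>
    obtain ⟨U, hU, hb, r, hr, hsq⟩ := hsqrt b
  · exact ⟨s(r b, r b), hsq b hb⟩
  · rw [← hsq b hb]
    exact ⟨Sym2.mulFiberHomeomorph (r b)⟩
  · exact ⟨U, hU, hb, Sym2.mulLocalTriv hr hsq, Sym2.mulLocalTriv_fst hr hsq⟩
end

section
/- Let σ be a partition of r with at least one part of multiplicity structure containing an eigenvalue of multiplicity one, realized by matrices A = diag(λ₁, ..., λᵣ) ∈ U(r) with λ₁ a simple eigenvalue. Then the space F_σ of matrices B ∈ U(r) modulo the conjugation action of Stab(A), subject to (A,B) being irreducible, is homeomorphic to SF_σ × S¹, where SF_σ is the corresponding space with B ∈ SU(r), via B ↦ (B', det B) where B' is obtained from B by multiplying its first column by det(B)⁻¹. -/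
/-- A pair of matrices `(A, B)` is irreducible if the only subspaces invariant
under both `A` and `B` are `0` and the whole space. -/
def IsIrreduciblePair {r : ℕ} (A B : Matrix (Fin r) (Fin r) ℂ) : Prop :=
  ∀ W : Submodule ℂ (Fin r → ℂ),
    (∀ v ∈ W, A.mulVec v ∈ W) → (∀ v ∈ W, B.mulVec v ∈ W) → W = ⊥ ∨ W = ⊤

/-- Unitary matrices `B` such that `(diag(λ), B)` is irreducible. -/
def FU (r : ℕ) (lam : Fin (r + 1) → ℂ) :=
  {B : Matrix (Fin (r + 1)) (Fin (r + 1)) ℂ //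
    B ∈ Matrix.unitaryGroup (Fin (r + 1)) ℂ ∧ IsIrreduciblePair (Matrix.diagonal lam) B}

/-- Conjugation by the centralizer of `diag(λ)` in `U(r)`. -/
def RelU (r : ℕ) (lam : Fin (r + 1) → ℂ) (B B' : FU r lam) : Prop :=
  ∃ T ∈ Matrix.unitaryGroup (Fin (r + 1)) ℂ,
    T * Matrix.diagonal lam = Matrix.diagonal lam * T ∧ B'.1 = T * B.1 * star T

/-- Special unitary matrices `B` such that `(diag(λ), B)` is irreducible. -/
def FSU (r : ℕ) (lam : Fin (r + 1) → ℂ) :=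
  {B : Matrix (Fin (r + 1)) (Fin (r + 1)) ℂ //
    B ∈ Matrix.specialUnitaryGroup (Fin (r + 1)) ℂ ∧ IsIrreduciblePair (Matrix.diagonal lam) B}

/-- Conjugation by the centralizer of `diag(λ)` in `SU(r)`. -/
def RelSU (r : ℕ) (lam : Fin (r + 1) → ℂ) (B B' : FSU r lam) : Prop :=
  ∃ T ∈ Matrix.specialUnitaryGroup (Fin (r + 1)) ℂ,
    T * Matrix.diagonal lam = Matrix.diagonal lam * T ∧ B'.1 = T * B.1 * star T


instance (r : ℕ) (lam : Fin (r + 1) → ℂ) : TopologicalSpace (FU r lam) :=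
  inferInstanceAs (TopologicalSpace {B : Matrix (Fin (r + 1)) (Fin (r + 1)) ℂ //
    B ∈ Matrix.unitaryGroup (Fin (r + 1)) ℂ ∧ IsIrreduciblePair (Matrix.diagonal lam) B})

instance (r : ℕ) (lam : Fin (r + 1) → ℂ) : TopologicalSpace (FSU r lam) :=
  inferInstanceAs (TopologicalSpace {B : Matrix (Fin (r + 1)) (Fin (r + 1)) ℂ //
    B ∈ Matrix.specialUnitaryGroup (Fin (r + 1)) ℂ ∧ IsIrreduciblePair (Matrix.diagonal lam) B})


/-!
Right multiplication by `diag(c, 1, …, 1)` rescales the first column, and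
`B ↦ (B · diag((det B)⁻¹, 1, …, 1), det B)` is a homeomorphism from `U(r)` onto `SU(r) × S¹` with
inverse `(C, z) ↦ C · diag(z, 1, …, 1)`. Since `λ₀` is a simple eigenvalue, `diag(c, 1, …, 1)` is
a function of `A = diag(λ)`: it commutes with the centralizer of `A`, so the map is equivariant
for the conjugation actions, and it is a polynomial in `A`, so it preserves the `A`-invariant
subspaces and irreducibility of `(A, B)` is kept. Conjugating by `T ∈ Stab(A)` is the same as conjugating by
`μT ∈ SU(r)` for `μ^(r+1) = (det T)⁻¹`, so the two orbit relations correspond and the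
homeomorphism descends to the quotients.
-/

open Matrix

theorem Complex.mem_unitary_of_norm_eq_one {z : ℂ} (hz : ‖z‖ = 1) : z ∈ unitary ℂ :=
  Unitary.mem_iff_star_mul_self.2 (by rw [Complex.star_def, Complex.conj_mul', hz]; norm_num)

theorem Circle.coe_mem_unitary (z : Circle) : (z : ℂ) ∈ unitary ℂ :=
  Complex.mem_unitary_of_norm_eq_one z.norm_coe

namespace Matrix

variable {ι : Type*} [Fintype ι] [DecidableEq ι]

section ColScaling

variable {R : Type*} [CommRing R] (i₀ : ι)

def colScaling : R →* Matrix ι ι R :=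
  (diagonalRingHom ι R).toMonoidHom.comp (MonoidHom.mulSingle (fun _ : ι => R) i₀)

theorem colScaling_apply (c : R) :
    colScaling i₀ c = diagonal fun j => if j = i₀ then c else 1 := by
  simp [colScaling, Pi.mulSingle_apply]

@[simp]
theorem det_colScaling (c : R) : (colScaling i₀ c).det = c := by
  simp [colScaling_apply]

theorem colScaling_mem_unitaryGroup [StarRing R] {c : R} (hc : c ∈ unitary R) :
    colScaling i₀ c ∈ unitaryGroup ι R := by
  have hstar : star (colScaling i₀ c) = colScaling i₀ (star c) := by
    simp [colScaling, star_eq_conjTranspose, diagonal_conjTranspose]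
  rw [mem_unitaryGroup_iff, hstar, ← map_mul, Unitary.mul_star_self_of_mem hc, map_one]

theorem continuous_colScaling [TopologicalSpace R] [IsTopologicalRing R] :
    Continuous (colScaling (R := R) i₀) := by
  simp only [funext (colScaling_apply i₀)]
  exact Continuous.matrix_diagonal (continuous_pi fun j => by split_ifs <;> fun_prop)

theorem colScaling_eq_diagonal_comp [DecidableEq R] {d : ι → R}
    (hsimple : ∀ i, i ≠ i₀ → d i ≠ d i₀) (c : R) :
    colScaling i₀ c = diagonal ((fun x => if x = d i₀ then c else 1) ∘ d) := by
  rw [colScaling_apply]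
  congr 1
  funext j
  by_cases hj : j = i₀
  · simp [hj]
  · simp [hj, hsimple j hj]

end ColScaling

section Field

variable {K : Type*} [Field K]

theorem commute_diagonal_comp {T : Matrix ι ι K} {d : ι → K} (hT : Commute T (diagonal d))
    (g : K → K) : Commute T (diagonal (g ∘ d)) := by
  refine (Matrix.ext fun i j => ?_ : T * _ = _ * T)
  have hij : T i j * (d j - d i) = 0 := by
    have := congr_fun₂ hT.eq i j
    rw [mul_diagonal, diagonal_mul] at this
    linear_combination this
  rw [mul_diagonal, diagonal_mul, Function.comp_apply, Function.comp_apply]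
  rcases mul_eq_zero.1 hij with h | h
  · simp [h]
  · rw [sub_eq_zero.1 h, mul_comm]

theorem commute_colScaling_of_commute_diagonal {T : Matrix ι ι K} {d : ι → K} {i₀ : ι}
    (hsimple : ∀ i, i ≠ i₀ → d i ≠ d i₀) (hT : Commute T (diagonal d)) (c : K) :
    Commute T (colScaling i₀ c) := by
  classical
  rw [colScaling_eq_diagonal_comp i₀ hsimple]
  exact commute_diagonal_comp hT _

theorem diagonal_comp_mulVec_mem [DecidableEq K] {d : ι → K} (g : K → K)
    {W : Submodule K (ι → K)} (hW : ∀ v ∈ W, diagonal d *ᵥ v ∈ W) {v : ι → K} (hv : v ∈ W) :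
    diagonal (g ∘ d) *ᵥ v ∈ W := by
  -- `diagonal (g ∘ d)` is `p (diagonal d)` for a polynomial `p` interpolating `g` on the `d i`.
  set p := Lagrange.interpolate (Finset.univ.image d) id g
  have hp : diagonal (g ∘ d) = Polynomial.aeval (diagonal d) p := by
    rw [show diagonal d = diagonalAlgHom K d from rfl, Polynomial.aeval_algHom_apply,
      Polynomial.aeval_pi_apply]
    congr 1
    funext i
    exact (Lagrange.eval_interpolate_at_node g (Set.injOn_id _)
      (Finset.mem_image_of_mem d (Finset.mem_univ i))).symm
  have := Polynomial.aeval_apply_smul_mem_of_le_comap hv p (toLinAlgEquiv' (diagonal d))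
    (fun w hw => hW w hw)
  rwa [Polynomial.aeval_algHom_apply, toLinAlgEquiv'_apply, ← hp] at this

end Field

section Unitary

variable {T : Matrix ι ι ℂ}

theorem exists_smul_mem_specialUnitaryGroup [Nonempty ι] (hT : T ∈ unitaryGroup ι ℂ) :
    ∃ μ ∈ unitary ℂ, μ • T ∈ specialUnitaryGroup ι ℂ := by
  obtain ⟨μ, hμ⟩ := IsAlgClosed.exists_pow_nat_eq T.det⁻¹ (Fintype.card_pos (α := ι))
  have hdet : ‖T.det‖ = 1 := CStarRing.norm_of_mem_unitary (det_of_mem_unitary hT)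
  have hμ_norm : ‖μ‖ = 1 := by
    refine (pow_eq_one_iff_of_nonneg (norm_nonneg _) (Fintype.card_ne_zero (α := ι))).1 ?_
    rw [← norm_pow, hμ, norm_inv, hdet, inv_one]
  have hμ_unitary := Complex.mem_unitary_of_norm_eq_one hμ_norm
  refine ⟨μ, hμ_unitary, mem_specialUnitaryGroup_iff.2
    ⟨Unitary.smul_mem_of_mem hμ_unitary hT, ?_⟩⟩
  rw [det_smul, hμ, inv_mul_cancel₀ (UnitaryGroup.det_isUnit ⟨T, hT⟩).ne_zero]

theorem smul_mul_mul_star_smul {μ : ℂ} (hμ : μ ∈ unitary ℂ) (M : Matrix ι ι ℂ) :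
    μ • T * M * star (μ • T) = T * M * star T := by
  rw [star_smul, smul_mul_assoc, smul_mul_assoc, mul_smul_comm, smul_smul,
    Unitary.mul_star_self_of_mem hμ, one_smul]

theorem det_mul_mul_star (hT : T ∈ unitaryGroup ι ℂ) (M : Matrix ι ι ℂ) :
    (T * M * star T).det = M.det := by
  rw [det_mul, det_mul, mul_right_comm, ← det_mul, mem_unitaryGroup_iff.1 hT, det_one, one_mul]

theorem commute_star_of_mem_unitaryGroup {A : Matrix ι ι ℂ} (hT : T ∈ unitaryGroup ι ℂ)
    (hTA : Commute T A) : Commute (star T) A :=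
  Commute.units_inv_left (u := Unitary.toUnits ⟨T, hT⟩) hTA

end Unitary

end Matrix

theorem IsIrreduciblePair.mul_colScaling {r : ℕ} {lam : Fin r → ℂ} {i₀ : Fin r}
    (hsimple : ∀ i, i ≠ i₀ → lam i ≠ lam i₀) {B : Matrix (Fin r) (Fin r) ℂ}
    (hB : IsIrreduciblePair (diagonal lam) B) {c : ℂ} (hc : c ≠ 0) :
    IsIrreduciblePair (diagonal lam) (B * colScaling i₀ c) := by
  intro W hWA hWB
  refine hB W hWA fun v hv => ?_
  have hv' : colScaling i₀ c⁻¹ *ᵥ v ∈ W := by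
    classical
    rw [colScaling_eq_diagonal_comp i₀ hsimple]
    exact diagonal_comp_mulVec_mem _ hWA hv
  simpa [mulVec_mulVec, Matrix.mul_assoc, ← map_mul, hc] using hWB _ hv'

/-- Local compactness of `Z` makes `Quot.mk S × id` a quotient map, which gives continuity of the
inverse. -/
def Homeomorph.quotProdOfRel {X Y Z : Type*} [TopologicalSpace X] [TopologicalSpace Y]
    [TopologicalSpace Z] [LocallyCompactSpace Z] {R : X → X → Prop} {S : Y → Y → Prop}
    (e : X ≃ₜ Y × Z) (hR : ∀ x x', R x x' → S (e x).1 (e x').1 ∧ (e x).2 = (e x').2)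
    (hS : ∀ y y' z, S y y' → R (e.symm (y, z)) (e.symm (y', z))) :
    Quot R ≃ₜ Quot S × Z where
  toFun := Quot.lift (fun x => (Quot.mk S (e x).1, (e x).2)) fun x x' h => by
    rw [Quot.sound (hR x x' h).1, (hR x x' h).2]
  invFun p := Quot.lift (fun y => Quot.mk R (e.symm (y, p.2)))
    (fun y y' h => Quot.sound (hS y y' p.2 h)) p.1
  left_inv := Quot.ind fun x => by simp
  right_inv := by
    rintro ⟨q, z⟩
    induction q using Quot.ind
    simp
  continuous_toFun := continuous_quot_lift _ <|
    (continuous_quot_mk.comp (continuous_fst.comp e.continuous)).prodMk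
      (continuous_snd.comp e.continuous)
  continuous_invFun := isQuotientMap_quot_mk.continuous_lift_prod_left <|
    continuous_quot_mk.comp e.symm.continuous

section Fiber

variable {r : ℕ} {lam : Fin (r + 1) → ℂ}

noncomputable def FU.det (B : FU r lam) : Circle :=
  ⟨B.1.det, mem_sphere_zero_iff_norm.2 (CStarRing.norm_of_mem_unitary (det_of_mem_unitary B.2.1))⟩

@[simp]
theorem FU.coe_det (B : FU r lam) : (B.det : ℂ) = B.1.det := rfl

theorem FU.det_ne_zero (B : FU r lam) : B.1.det ≠ 0 :=
  B.coe_det ▸ B.det.coe_ne_zero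

variable (hsimple : ∀ i, i ≠ 0 → lam i ≠ lam 0)

noncomputable def FU.toFSU (B : FU r lam) : FSU r lam :=
  ⟨B.1 * colScaling 0 ((B.det⁻¹ : Circle) : ℂ),
    mem_specialUnitaryGroup_iff.2
      ⟨mul_mem B.2.1 (colScaling_mem_unitaryGroup 0 (B.det⁻¹).coe_mem_unitary), by
        rw [det_mul, det_colScaling, Circle.coe_inv, B.coe_det, mul_inv_cancel₀ B.det_ne_zero]⟩,
    B.2.2.mul_colScaling hsimple (B.det⁻¹).coe_ne_zero⟩

noncomputable def FSU.toFU (C : FSU r lam) (z : Circle) : FU r lam :=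
  ⟨C.1 * colScaling 0 (z : ℂ),
    mul_mem (mem_specialUnitaryGroup_iff.1 C.2.1).1
      (colScaling_mem_unitaryGroup 0 z.coe_mem_unitary),
    C.2.2.mul_colScaling hsimple z.coe_ne_zero⟩

theorem FU.toFSU_toFU (B : FU r lam) : (B.toFSU hsimple).toFU hsimple B.det = B := by
  refine Subtype.ext ?_
  simp [FU.toFSU, FSU.toFU, Matrix.mul_assoc, ← map_mul, B.det_ne_zero]

theorem FSU.det_toFU (C : FSU r lam) (z : Circle) : (C.toFU hsimple z).det = z := by
  refine Subtype.ext ?_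
  simp [FU.det, FSU.toFU, (mem_specialUnitaryGroup_iff.1 C.2.1).2]

theorem FSU.toFU_toFSU (C : FSU r lam) (z : Circle) : (C.toFU hsimple z).toFSU hsimple = C := by
  refine Subtype.ext ?_
  change (C.toFU hsimple z).1 * colScaling 0 (((C.toFU hsimple z).det⁻¹ : Circle) : ℂ) = C.1
  rw [FSU.det_toFU]
  simp [FSU.toFU, Matrix.mul_assoc, ← map_mul]

noncomputable def FU.homeomorphFSUProdCircle : FU r lam ≃ₜ FSU r lam × Circle where
  toFun B := (B.toFSU hsimple, B.det)
  invFun p := p.1.toFU hsimple p.2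
  left_inv := FU.toFSU_toFU hsimple
  right_inv := fun ⟨C, z⟩ => Prod.ext (FSU.toFU_toFSU hsimple C z) (FSU.det_toFU hsimple C z)
  continuous_toFun := by
    have hdet : Continuous (FU.det (lam := lam)) :=
      continuous_subtype_val.matrix_det.subtype_mk _
    refine .prodMk (.subtype_mk (continuous_subtype_val.mul ?_) _) hdet
    exact (continuous_colScaling 0).comp (continuous_subtype_val.comp hdet.inv)
  continuous_invFun :=
    .subtype_mk ((continuous_subtype_val.comp continuous_fst).mul
      ((continuous_colScaling 0).comp (continuous_subtype_val.comp continuous_snd))) _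

theorem FU.relSU_toFSU_of_relU {B B' : FU r lam} (h : RelU r lam B B') :
    RelSU r lam (B.toFSU hsimple) (B'.toFSU hsimple) ∧ B.det = B'.det := by
  obtain ⟨T, hT, hTA, hB'⟩ := h
  obtain ⟨μ, hμ, hμT⟩ := exists_smul_mem_specialUnitaryGroup hT
  have hdet : B.det = B'.det := Subtype.ext (by simp [hB', det_mul_mul_star hT])
  refine ⟨⟨μ • T, hμT, Commute.smul_left hTA μ, ?_⟩, hdet⟩
  change B'.1 * colScaling 0 ((B'.det⁻¹ : Circle) : ℂ)
    = μ • T * (B.1 * colScaling 0 ((B.det⁻¹ : Circle) : ℂ)) * star (μ • T)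
  rw [smul_mul_mul_star_smul hμ, ← hdet, hB']
  simp only [Matrix.mul_assoc, (commute_colScaling_of_commute_diagonal hsimple
    (commute_star_of_mem_unitaryGroup hT hTA) _).eq]

theorem FSU.relU_toFU_of_relSU {C C' : FSU r lam} (h : RelSU r lam C C') (z : Circle) :
    RelU r lam (C.toFU hsimple z) (C'.toFU hsimple z) := by
  obtain ⟨T, hT, hTA, hC'⟩ := h
  have hT_unitary := (mem_specialUnitaryGroup_iff.1 hT).1
  refine ⟨T, hT_unitary, hTA, ?_⟩
  change C'.1 * colScaling 0 (z : ℂ) = T * (C.1 * colScaling 0 (z : ℂ)) * star T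
  rw [hC']
  simp only [Matrix.mul_assoc, (commute_colScaling_of_commute_diagonal hsimple
    (commute_star_of_mem_unitaryGroup hT_unitary hTA) _).eq]

end Fiber

theorem fiber_splits_su_times_circle_general (r : ℕ) (lam : Fin (r + 1) → ℂ)
    (hsimple : ∀ i, i ≠ 0 → lam i ≠ lam 0) :
    ∃ f : Quot (RelU r lam) ≃ₜ Quot (RelSU r lam) × Circle,
      ∀ (B : FU r lam) (C : FSU r lam),
        C.1 = B.1 * Matrix.diagonal (fun j => if j = 0 then (B.1.det)⁻¹ else 1) →
        (f (Quot.mk _ B)).1 = Quot.mk _ C ∧ ((f (Quot.mk _ B)).2 : ℂ) = B.1.det := by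
  refine ⟨Homeomorph.quotProdOfRel (FU.homeomorphFSUProdCircle hsimple)
    (fun _ _ h => FU.relSU_toFSU_of_relU hsimple h)
    (fun _ _ z h => FSU.relU_toFU_of_relSU hsimple h z), fun B C hC => ⟨?_, rfl⟩⟩
  have hC : C = B.toFSU hsimple := Subtype.ext (by rw [hC, ← colScaling_apply]; rfl)
  rw [hC]
  rfl

/-- If `A = diag(λ₀, …)` is unitary with `λ₀` a simple eigenvalue (and all
eigenvalues `n`-th powers of a common value, the eigenvalue pattern of representations of
`Γₙ`), then `F_σ = {B ∈ U(r) : (A,B) irreducible}/Stab(A)` is homeomorphic to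
`SF_σ × S¹`, via `B ↦ (B·(first column rescaled by (det B)⁻¹), det B)`. -/
theorem fiber_splits_su_times_circle (r n : ℕ) (lam : Fin (r + 1) → ℂ)
    (hcirc : ∀ i, ‖lam i‖ = 1)
    (hsimple : ∀ i, i ≠ 0 → lam i ≠ lam 0)
    (hpow : ∀ i, lam i ^ n = lam 0 ^ n) :
    ∃ f : Quot (RelU r lam) ≃ₜ Quot (RelSU r lam) × Circle,
      ∀ (B : FU r lam) (C : FSU r lam),
        C.1 = B.1 * Matrix.diagonal (fun j => if j = 0 then (B.1.det)⁻¹ else 1) →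
        (f (Quot.mk _ B)).1 = Quot.mk _ C ∧ ((f (Quot.mk _ B)).2 : ℂ) = B.1.det :=
  fiber_splits_su_times_circle_general r lam hsimple
end
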